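/- A monomial ideal I ⊂ k[x_1,...,x_n] (all generators of degree ≤ d) is strongly stable if and only if b-pol(I) admits an irreducible decomposition ⋂_{s=1}^r P_s where each P_s = (x_{1,γ_1^{⟨s⟩}}, ..., x_{t_s,γ_{t_s}^{⟨s⟩}}) with 1 ≤ γ_1^{⟨s⟩} ≤ γ_2^{⟨s⟩} ≤ ··· ≤ γ_{t_s}^{⟨s⟩}. -/

import Mathlib

open MvPolynomial Classical

noncomputable section

/-- The monomial `x^a` with coefficient `1`. -/
def mon {σ : Type*} (k : Type*) [Field k] (a : σ →₀ ℕ) : MvPolynomial σ k :=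
  MvPolynomial.monomial a 1

/-- `x^a` for an exponent vector given as a function on a finite type. -/
def monF {σ : Type*} [Fintype σ] (k : Type*) [Field k] (a : σ → ℕ) : MvPolynomial σ k :=
  mon k (Finsupp.equivFunOnFinite.symm a)

/-- A monomial ideal: an ideal generated by monomials. -/
def IsMonomialIdeal {σ : Type*} [Fintype σ] {k : Type*} [Field k]
    (I : Ideal (MvPolynomial σ k)) : Prop :=
  ∃ A : Set (σ → ℕ), I = Ideal.span ((monF k) '' A)

/-- The set `G(I)` of (exponent vectors of) minimal monomial generators of a monomial
ideal `I`: monomials in `I` such that dividing by any variable leaves `I`. -/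
def minGens {σ : Type*} [Fintype σ] {k : Type*} [Field k]
    (I : Ideal (MvPolynomial σ k)) : Set (σ → ℕ) :=
  {a | monF k a ∈ I ∧ ∀ i : σ, 0 < a i → monF k (a - Pi.single i 1) ∉ I}

/-- The total degree `|a|` of an exponent vector. -/
def degV {σ : Type*} [Fintype σ] (a : σ → ℕ) : ℕ := ∑ i, a i

/-- A strongly stable (monomial) ideal in `k[x_1, …, x_n]`. -/
def StronglyStable {n : ℕ} {k : Type*} [Field k]
    (I : Ideal (MvPolynomial (Fin n) k)) : Prop :=
  IsMonomialIdeal I ∧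
    ∀ a ∈ minGens I, ∀ i j : Fin n, j < i → 0 < a i →
      monF k (a - Pi.single i 1 + Pi.single j 1) ∈ I

/-- All minimal generators of `I` have degree at most `d`. -/
def GensDegLE {σ : Type*} [Fintype σ] {k : Type*} [Field k]
    (I : Ideal (MvPolynomial σ k)) (d : ℕ) : Prop :=
  ∀ a ∈ minGens I, degV a ≤ d

/-- `psum a i = a_1 + ⋯ + a_{i-1}` (the partial sum over indices `< i`). -/
def psum {n : ℕ} (a : Fin n → ℕ) (i : Fin n) : ℕ :=
  ∑ j ∈ Finset.univ.filter (fun j => j < i), a j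

/-- The exponent vector of the alternative polarization `b-pol(x^a)`:
`b-pol(x^a) = ∏_{1 ≤ i ≤ n, b_{i-1}+1 ≤ j ≤ b_i} x_{i,j}` where `b_i = a_1 + ⋯ + a_i`. -/
def bpolExp {n : ℕ} (d : ℕ) (a : Fin n → ℕ) : Fin n × Fin d → ℕ := fun p =>
  if psum a p.1 ≤ (p.2 : ℕ) ∧ (p.2 : ℕ) < psum a p.1 + a p.1 then 1 else 0

/-- The alternative polarization `b-pol(I) ⊆ k[x_{i,j}]` of a monomial ideal `I`. -/
def bpolIdeal {n : ℕ} (d : ℕ) {k : Type*} [Field k]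
    (I : Ideal (MvPolynomial (Fin n) k)) : Ideal (MvPolynomial (Fin n × Fin d) k) :=
  Ideal.span {q | ∃ a ∈ minGens I, q = monF k (bpolExp d a)}

/-- The prime monomial ideal `(x_i : i ∈ F)`. -/
def varIdeal {σ : Type*} (k : Type*) [Field k] (F : Set σ) : Ideal (MvPolynomial σ k) :=
  Ideal.span (MvPolynomial.X '' F)

/-- `F` gives an irreducible component `(x_i : i ∈ F)` of the squarefree monomial ideal `J`,
i.e. `F` is minimal among subsets with `J ⊆ (x_i : i ∈ F)`. -/
def IsIrredCompSF {σ : Type*} {k : Type*} [Field k]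
    (J : Ideal (MvPolynomial σ k)) (F : Set σ) : Prop :=
  J ≤ varIdeal k F ∧ ∀ F' ⊆ F, J ≤ varIdeal k F' → F' = F

/-- The Alexander dual of a squarefree monomial ideal: the ideal generated by the
monomials `∏_{i ∈ F} x_i` over the irreducible components `(x_i : i ∈ F)` of `J`. -/
def adual {σ : Type*} [Fintype σ] {k : Type*} [Field k]
    (J : Ideal (MvPolynomial σ k)) : Ideal (MvPolynomial σ k) :=
  Ideal.span {q | ∃ F : Set σ, IsIrredCompSF J F ∧
    q = monF k (fun i => if i ∈ F then 1 else 0)}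

/-- Transpose `x_{i,j} ↦ y_{j,i}` of an ideal of `k[x_{i,j}]`. -/
def transposeIdeal {n d : ℕ} {k : Type*} [Field k]
    (J : Ideal (MvPolynomial (Fin n × Fin d) k)) : Ideal (MvPolynomial (Fin d × Fin n) k) :=
  Ideal.map (MvPolynomial.rename (Prod.swap : Fin n × Fin d → Fin d × Fin n)
    : MvPolynomial (Fin n × Fin d) k →ₐ[k] MvPolynomial (Fin d × Fin n) k) J

end

noncomputable section AuxDev

open Finset

variable {σ : Type*} [Fintype σ] {k : Type*} [Field k]

lemma eqF_apply (a : σ → ℕ) (p : σ) : (Finsupp.equivFunOnFinite.symm a) p = a p :=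
  congrFun (Finsupp.coe_equivFunOnFinite_symm a) p

lemma eqF_add (a b : σ → ℕ) : Finsupp.equivFunOnFinite.symm (a + b) =
    Finsupp.equivFunOnFinite.symm a + Finsupp.equivFunOnFinite.symm b := by
  ext x; simp [eqF_apply]

lemma monF_add (a b : σ → ℕ) : monF k (a + b) = monF k a * monF k b := by
  simp [monF, mon, eqF_add, MvPolynomial.monomial_mul]

lemma mem_of_le {I : Ideal (MvPolynomial σ k)} {a c : σ → ℕ} (h : a ≤ c)
    (ha : monF k a ∈ I) : monF k c ∈ I := by
  have hc : c = a + (c - a) := by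
    funext p
    have hap : a p ≤ c p := h p
    simp only [Pi.add_apply, Pi.sub_apply]
    omega
  rw [hc, monF_add]
  exact Ideal.mul_mem_right _ _ ha

lemma degV_single_lt {c : σ → ℕ} {i : σ} (hi : 0 < c i) :
    degV (c - Pi.single i 1) + 1 = degV c := by
  have key : ∀ p, (c - Pi.single i 1 : σ → ℕ) p + (Pi.single i 1 : σ → ℕ) p = c p := by
    intro p
    by_cases hp : p = i
    · subst hp; simp only [Pi.sub_apply, Pi.single_eq_same]; omega
    · simp [Pi.single_eq_of_ne hp]
  have h1 : degV (c - Pi.single i 1) + degV (Pi.single i 1 : σ → ℕ) = degV c := by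
    unfold degV
    rw [← Finset.sum_add_distrib]
    exact Finset.sum_congr rfl (fun p _ => key p)
  have h2 : degV (Pi.single i 1 : σ → ℕ) = 1 := by
    unfold degV
    rw [Finset.sum_pi_single' i 1]
    simp
  omega

lemma exists_minGen_le_aux {I : Ideal (MvPolynomial σ k)} :
    ∀ N, ∀ c : σ → ℕ, degV c ≤ N → monF k c ∈ I → ∃ g ∈ minGens I, g ≤ c := by
  intro N
  induction N with
  | zero =>
    intro c hdeg hm
    refine ⟨c, ⟨hm, ?_⟩, le_refl c⟩
    intro i hi
    have : c i ≤ degV c := Finset.single_le_sum (fun _ _ => Nat.zero_le _) (mem_univ i)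
    omega
  | succ N ih =>
    intro c hdeg hm
    by_cases h : ∀ i : σ, 0 < c i → monF k (c - Pi.single i 1) ∉ I
    · exact ⟨c, ⟨hm, h⟩, le_refl c⟩
    · push_neg at h
      obtain ⟨i, hi, hmem⟩ := h
      have hdeg' : degV (c - Pi.single i 1) ≤ N := by
        have := degV_single_lt hi; omega
      obtain ⟨g, hg, hgle⟩ := ih _ hdeg' hmem
      refine ⟨g, hg, le_trans hgle ?_⟩
      intro p; simp only [Pi.sub_apply]; omega

lemma exists_minGen_le {I : Ideal (MvPolynomial σ k)} {c : σ → ℕ} (hm : monF k c ∈ I) :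
    ∃ g ∈ minGens I, g ≤ c :=
  exists_minGen_le_aux (degV c) c (le_refl _) hm

lemma support_monF (c : σ → ℕ) :
    (monF k c).support = {Finsupp.equivFunOnFinite.symm c} := by
  simp [monF, mon, MvPolynomial.support_monomial]

lemma mem_span_monF_iff {A : Set (σ → ℕ)} {q : MvPolynomial σ k} :
    q ∈ Ideal.span ((monF k) '' A) ↔
      ∀ e ∈ q.support, ∃ a ∈ A, ∀ p, a p ≤ e p := by
  have himg : (monF k) '' A =
      (fun s => MvPolynomial.monomial s (1 : k)) '' (⇑Finsupp.equivFunOnFinite.symm '' A) := by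
    rw [Set.image_image]; rfl
  rw [himg, MvPolynomial.mem_ideal_span_monomial_image]
  refine forall₂_congr fun e _ => ?_
  constructor
  · rintro ⟨si, ⟨a, haA, rfl⟩, hle⟩
    exact ⟨a, haA, fun p => by simpa [eqF_apply] using (Finsupp.le_def.mp hle p)⟩
  · rintro ⟨a, haA, hle⟩
    exact ⟨_, ⟨a, haA, rfl⟩, Finsupp.le_def.mpr fun p => by simpa [eqF_apply] using hle p⟩

lemma monF_mem_span_iff {A : Set (σ → ℕ)} {c : σ → ℕ} :
    monF k c ∈ Ideal.span ((monF k) '' A) ↔ ∃ a ∈ A, ∀ p, a p ≤ c p := by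
  rw [mem_span_monF_iff, support_monF]
  simp [eqF_apply]

lemma mem_varIdeal_iff {F : Set σ} {q : MvPolynomial σ k} :
    q ∈ varIdeal k F ↔ ∀ e ∈ q.support, ∃ p ∈ F, e p ≠ 0 :=
  MvPolynomial.mem_ideal_span_X_image

lemma monF_mem_varIdeal_iff {F : Set σ} {c : σ → ℕ} :
    monF k c ∈ varIdeal k F ↔ ∃ p ∈ F, c p ≠ 0 := by
  rw [mem_varIdeal_iff, support_monF]
  simp [eqF_apply]

section PSsec

variable {n d : ℕ} {k : Type*} [Field k]

/-- extension of a `Fin n`-indexed vector to `ℕ`. -/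
def extF (a : Fin n → ℕ) : ℕ → ℕ := fun v => if h : v < n then a ⟨v, h⟩ else 0

/-- partial sums of the extension. -/
def PS (a : Fin n → ℕ) (r : ℕ) : ℕ := ∑ v ∈ Finset.range r, extF a v

lemma PS_zero (a : Fin n → ℕ) : PS a 0 = 0 := rfl

lemma PS_succ (a : Fin n → ℕ) (r : ℕ) : PS a (r + 1) = PS a r + extF a r :=
  Finset.sum_range_succ _ _

lemma PS_mono (a : Fin n → ℕ) : Monotone (PS a) := by
  intro r s hrs
  exact Finset.sum_le_sum_of_subset (Finset.range_subset_range.mpr hrs)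

lemma psum_eq (a : Fin n → ℕ) (u : Fin n) : _root_.psum a u = PS a u.val := by
  unfold _root_.psum PS
  rw [Finset.sum_filter]
  have h1 : ∀ j : Fin n, (if j < u then a j else 0) =
      (fun v : ℕ => if v < u.val then extF a v else 0) j.val := by
    intro j
    simp only [extF, j.isLt, dif_pos, Fin.lt_def]
  have h2 : (∑ j : Fin n, if j < u then a j else 0) =
      ∑ v ∈ Finset.range n, (fun v : ℕ => if v < u.val then extF a v else 0) v := by
    rw [← Fin.sum_univ_eq_sum_range (fun v : ℕ => if v < u.val then extF a v else 0) n]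
    exact Finset.sum_congr rfl (fun j _ => h1 j)
  rw [h2]
  simp only []
  rw [← Finset.sum_filter]
  congr 1
  ext v
  simp only [Finset.mem_filter, Finset.mem_range]
  have := u.isLt
  constructor
  · rintro ⟨_, hv⟩; exact hv
  · intro hv; exact ⟨by omega, hv⟩

lemma psumLe_eq (a : Fin n → ℕ) (u : Fin n) : _root_.psum a u + a u = PS a (u.val + 1) := by
  rw [PS_succ, psum_eq]
  congr 1
  simp [extF, u.isLt]

lemma PS_degV (a : Fin n → ℕ) : PS a n = degV a := by
  unfold degV
  rw [show (∑ i, a i) = ∑ i : Fin n, extF a i.val by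
    exact Finset.sum_congr rfl (fun i _ => by simp [extF, i.isLt])]
  exact (Fin.sum_univ_eq_sum_range (extF a) n).symm

lemma extF_move {a : Fin n → ℕ} {i j : Fin n} (hai : 0 < a i) (hij : j ≠ i) (x : ℕ) :
    extF (a - Pi.single i 1 + Pi.single j 1) x + (if x = i.val then 1 else 0) =
      extF a x + (if x = j.val then 1 else 0) := by
  by_cases h : x < n
  · have hxi : (x = i.val) ↔ ((⟨x, h⟩ : Fin n) = i) := by rw [Fin.ext_iff]
    have hxj : (x = j.val) ↔ ((⟨x, h⟩ : Fin n) = j) := by rw [Fin.ext_iff]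
    simp only [extF, dif_pos h, Pi.add_apply, Pi.sub_apply]
    by_cases hpi : (⟨x, h⟩ : Fin n) = i
    · have hpj : (⟨x, h⟩ : Fin n) ≠ j := by rw [hpi]; exact fun hh => hij hh.symm
      rw [if_pos (hxi.mpr hpi), if_neg (fun hh => hpj (hxj.mp hh))]
      rw [Pi.single_apply, Pi.single_apply, if_pos hpi, if_neg hpj]
      have hax : a ⟨x, h⟩ = a i := by rw [hpi]
      omega
    · rw [if_neg (fun hh => hpi (hxi.mp hh))]
      by_cases hpj : (⟨x, h⟩ : Fin n) = j
      · rw [if_pos (hxj.mpr hpj), Pi.single_apply, Pi.single_apply, if_neg hpi, if_pos hpj]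
        omega
      · rw [if_neg (fun hh => hpj (hxj.mp hh)), Pi.single_apply, Pi.single_apply,
          if_neg hpi, if_neg hpj]
        omega
  · have hxi : x ≠ i.val := by intro hh; exact h (hh ▸ i.isLt)
    have hxj : x ≠ j.val := by intro hh; exact h (hh ▸ j.isLt)
    simp [extF, h, hxi, hxj]

lemma PS_move {a : Fin n → ℕ} {i j : Fin n} (hai : 0 < a i) (hij : j ≠ i) (r : ℕ) :
    PS (a - Pi.single i 1 + Pi.single j 1) r + (if i.val < r then 1 else 0) =
      PS a r + (if j.val < r then 1 else 0) := by
  induction r with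
  | zero => simp [PS_zero]
  | succ r ih =>
    have hmv := extF_move hai hij r
    rw [PS_succ, PS_succ]
    split_ifs at hmv ih ⊢ <;> omega

lemma PS_move_le {a : Fin n → ℕ} {i j : Fin n} (hai : 0 < a i) (hij : j < i) (r : ℕ) :
    PS a r ≤ PS (a - Pi.single i 1 + Pi.single j 1) r := by
  have hmv := PS_move hai (ne_of_lt hij) r
  have hj : j.val < i.val := hij
  split_ifs at hmv <;> omega

lemma move_apply (a : Fin n → ℕ) (i j p : Fin n) :
    (a - Pi.single i 1 + Pi.single j 1 : Fin n → ℕ) p =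
      a p - (if p = i then 1 else 0) + (if p = j then 1 else 0) := by
  simp only [Pi.add_apply, Pi.sub_apply, Pi.single_apply]

lemma stable_move {I : Ideal (MvPolynomial (Fin n) k)} (hI : StronglyStable I)
    {c : Fin n → ℕ} (hc : monF k c ∈ I) {i j : Fin n} (hji : j < i) (hci : 0 < c i) :
    monF k (c - Pi.single i 1 + Pi.single j 1) ∈ I := by
  obtain ⟨g, hgG, hgle⟩ := exists_minGen_le hc
  have hij : i ≠ j := (ne_of_lt hji).symm
  by_cases hgi : g i = c i
  · have hgi0 : 0 < g i := by omega
    have hg' := hI.2 g hgG i j hji hgi0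
    refine mem_of_le ?_ hg'
    intro p
    have hgp : g p ≤ c p := hgle p
    simp only [Pi.add_apply, Pi.sub_apply, Pi.single_apply]
    split_ifs with h1 h2 h2
    · exact absurd (h1.symm.trans h2) hij
    · omega
    · omega
    · omega
  · have hgi' : g i < c i := lt_of_le_of_ne (hgle i) hgi
    refine mem_of_le ?_ hgG.1
    intro p
    have hgp : g p ≤ c p := hgle p
    simp only [Pi.add_apply, Pi.sub_apply, Pi.single_apply]
    split_ifs with h1 h2 h2
    · exact absurd (h1.symm.trans h2) hij
    · have e1 : g p = g i := by rw [h1]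
      have e2 : c p = c i := by rw [h1]
      omega
    · omega
    · omega

lemma stable_dominate_aux {I : Ideal (MvPolynomial (Fin n) k)} (hI : StronglyStable I) :
    ∀ N (a c : Fin n → ℕ), (∀ u : Fin n, PS a (u.val + 1) ≤ PS c (u.val + 1)) →
      (∑ u : Fin n, (PS c (u.val + 1) - PS a (u.val + 1))) < N →
      monF k a ∈ I → monF k c ∈ I := by
  intro N
  induction N with
  | zero => intro a c _ hM _; omega
  | succ N ih =>
    intro a c hdom hM ha
    by_cases hle : a ≤ c
    · exact mem_of_le hle ha
    · have hbad : ∃ i, c i < a i := by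
        by_contra hcon
        push_neg at hcon
        exact hle (fun p => hcon p)
      have hne : (Finset.univ.filter (fun i : Fin n => c i < a i)).Nonempty := by
        obtain ⟨i, hi⟩ := hbad
        exact ⟨i, by simp [hi]⟩
      set i := (Finset.univ.filter (fun i : Fin n => c i < a i)).min' hne with hidef
      have hiS : i ∈ Finset.univ.filter (fun i : Fin n => c i < a i) := Finset.min'_mem _ _
      have hci : c i < a i := by
        have h := hiS; simp only [Finset.mem_filter] at h; exact h.2
      have hmin : ∀ v : Fin n, v < i → a v ≤ c v := by
        intro v hv
        by_contra hcon
        push_neg at hcon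
        have : i ≤ v := Finset.min'_le _ _ (by simp [hcon])
        exact absurd hv (not_lt.mpr this)
      have hlow : ∀ x : ℕ, x < i.val → extF a x ≤ extF c x := by
        intro x hx
        have hxn : x < n := lt_trans hx i.isLt
        simp only [extF, dif_pos hxn]
        exact hmin ⟨x, hxn⟩ (by simpa [Fin.lt_def] using hx)
      have hexj : ∃ jj : Fin n, jj < i ∧ a jj < c jj := by
        by_contra hcon
        push_neg at hcon
        have hall : ∀ x : ℕ, x < i.val → extF a x = extF c x := by
          intro x hx
          have hxn : x < n := lt_trans hx i.isLt
          have h1 := hlow x hx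
          have h2 : c ⟨x, hxn⟩ ≤ a ⟨x, hxn⟩ :=
            hcon ⟨x, hxn⟩ (by simpa [Fin.lt_def] using hx)
          simp only [extF, dif_pos hxn] at h1 ⊢
          omega
        have h2 := hdom i
        rw [PS_succ, PS_succ] at h2
        have hext : extF c i.val < extF a i.val := by
          simp only [extF, dif_pos i.isLt, Fin.eta]
          exact hci
        have heq : PS a i.val = PS c i.val :=
          Finset.sum_congr rfl (fun x hx => hall x (Finset.mem_range.mp hx))
        omega
      obtain ⟨j, hji, haj⟩ := hexj
      have hai : 0 < a i := by omega
      have hb : monF k (a - Pi.single i 1 + Pi.single j 1) ∈ I := stable_move hI ha hji hai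
      have hjvi : j.val < i.val := hji
      have hstrict : ∀ r : ℕ, j.val < r → r ≤ i.val → PS a r < PS c r := by
        intro r hjr hri
        apply Finset.sum_lt_sum
        · intro x hx
          exact hlow x (lt_of_lt_of_le (Finset.mem_range.mp hx) hri)
        · refine ⟨j.val, Finset.mem_range.mpr hjr, ?_⟩
          simp only [extF, dif_pos j.isLt, Fin.eta]
          exact haj
      have hdomb : ∀ u : Fin n,
          PS (a - Pi.single i 1 + Pi.single j 1) (u.val + 1) ≤ PS c (u.val + 1) := by
        intro u
        have hmv := PS_move hai (ne_of_lt hji) (u.val + 1)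
        by_cases h1 : i.val < u.val + 1
        · have h2 : j.val < u.val + 1 := by omega
          rw [if_pos h1, if_pos h2] at hmv
          have := hdom u
          omega
        · by_cases h2 : j.val < u.val + 1
          · rw [if_neg h1, if_pos h2] at hmv
            have := hstrict (u.val + 1) h2 (by omega)
            omega
          · rw [if_neg h1, if_neg h2] at hmv
            have := hdom u
            omega
      have hMb : (∑ u : Fin n,
          (PS c (u.val + 1) - PS (a - Pi.single i 1 + Pi.single j 1) (u.val + 1))) < N := by
        have hterm : ∀ u : Fin n,
            PS c (u.val + 1) - PS (a - Pi.single i 1 + Pi.single j 1) (u.val + 1) ≤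
            PS c (u.val + 1) - PS a (u.val + 1) := by
          intro u
          have := PS_move_le hai hji (u.val + 1)
          omega
        have hstrictterm : PS c (j.val + 1) - PS (a - Pi.single i 1 + Pi.single j 1) (j.val + 1) <
            PS c (j.val + 1) - PS a (j.val + 1) := by
          have hmv := PS_move hai (ne_of_lt hji) (j.val + 1)
          rw [if_neg (by omega : ¬ i.val < j.val + 1), if_pos (by omega : j.val < j.val + 1)] at hmv
          have hst := hstrict (j.val + 1) (by omega) (by omega)
          omega
        have hlt : (∑ u : Fin n,
            (PS c (u.val + 1) - PS (a - Pi.single i 1 + Pi.single j 1) (u.val + 1))) <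
            (∑ u : Fin n, (PS c (u.val + 1) - PS a (u.val + 1))) := by
          apply Finset.sum_lt_sum
          · intro u _; exact hterm u
          · exact ⟨j, Finset.mem_univ j, hstrictterm⟩
        omega
      exact ih _ c hdomb hMb hb

lemma stable_dominate {I : Ideal (MvPolynomial (Fin n) k)} (hI : StronglyStable I)
    {a c : Fin n → ℕ} (hdom : ∀ u : Fin n, PS a (u.val + 1) ≤ PS c (u.val + 1))
    (ha : monF k a ∈ I) : monF k c ∈ I :=
  stable_dominate_aux hI (_ + 1) a c hdom (Nat.lt_succ_self _) ha

end PSsec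

section BpolSec

variable {n d : ℕ} {k : Type*} [Field k]

lemma bpolExp_le_one (a : Fin n → ℕ) (p : Fin n × Fin d) : bpolExp d a p ≤ 1 := by
  unfold bpolExp
  split_ifs <;> omega

lemma bpolExp_ne_zero_iff (a : Fin n → ℕ) (p : Fin n × Fin d) :
    bpolExp d a p ≠ 0 ↔ (PS a p.1.val ≤ p.2.val ∧ p.2.val < PS a (p.1.val + 1)) := by
  have h1 : _root_.psum a p.1 = PS a p.1.val := psum_eq a p.1
  have h2 : _root_.psum a p.1 + a p.1 = PS a (p.1.val + 1) := psumLe_eq a p.1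
  unfold bpolExp
  split_ifs with h
  · simp only [ne_eq, one_ne_zero, not_false_eq_true, true_iff]
    omega
  · constructor
    · intro h0
      exact absurd rfl h0
    · intro hc
      exact absurd (⟨by omega, by omega⟩ : _root_.psum a p.1 ≤ (p.2 : ℕ) ∧
        (p.2 : ℕ) < _root_.psum a p.1 + a p.1) h

/-- the "hit" criterion for monotone staircases. -/
lemma hit_iff {t : ℕ} (htn : t ≤ n) (γ : Fin t → Fin d) (hγ : Monotone γ) (a : Fin n → ℕ) :
    (∃ m : Fin t, bpolExp d a (Fin.castLE htn m, γ m) ≠ 0) ↔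
      (∃ m : Fin t, ((γ m : ℕ) < PS a (m.val + 1))) := by
  constructor
  · rintro ⟨m, hm⟩
    rw [bpolExp_ne_zero_iff] at hm
    exact ⟨m, by simpa using hm.2⟩
  · rintro ⟨m, hm⟩
    have hne : (Finset.univ.filter (fun m' : Fin t => (γ m' : ℕ) < PS a (m'.val + 1))).Nonempty :=
      ⟨m, by simp [hm]⟩
    set m0 := (Finset.univ.filter (fun m' : Fin t => (γ m' : ℕ) < PS a (m'.val + 1))).min' hne
      with hm0def
    have hm0 : (γ m0 : ℕ) < PS a (m0.val + 1) := by
      have h := Finset.min'_mem _ hne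
      rw [Finset.mem_filter] at h
      exact h.2
    have hlow : PS a m0.val ≤ (γ m0 : ℕ) := by
      by_contra hcon
      push_neg at hcon
      have hm0pos : m0.val ≠ 0 := by
        intro h0
        rw [h0] at hcon
        simp [PS_zero] at hcon
      set m1 : Fin t := ⟨m0.val - 1, by omega⟩ with hm1def
      have hm1lt : m1 < m0 := by
        rw [Fin.lt_def]
        simp [hm1def]
        omega
      have hγ1 : (γ m1 : ℕ) ≤ (γ m0 : ℕ) := hγ (le_of_lt hm1lt)
      have hm1S : m1 ∈ Finset.univ.filter (fun m' : Fin t => (γ m' : ℕ) < PS a (m'.val + 1)) := by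
        rw [Finset.mem_filter]
        refine ⟨Finset.mem_univ _, ?_⟩
        have : m1.val + 1 = m0.val := by simp [hm1def]; omega
        rw [this]
        omega
      have := Finset.min'_le _ _ hm1S
      exact absurd hm1lt (not_lt.mpr this)
    refine ⟨m0, ?_⟩
    rw [bpolExp_ne_zero_iff]
    exact ⟨by simpa using hlow, by simpa using hm0⟩

/-- interval nesting of b-pol supports forces divisibility. -/
lemma nest {a' b : Fin n → ℕ} (hda' : degV a' ≤ d)
    (hle : ∀ p : Fin n × Fin d, bpolExp d a' p ≤ bpolExp d b p) : a' ≤ b := by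
  intro u
  show a' u ≤ b u
  by_cases h0 : a' u = 0
  · omega
  · have hsucc : PS a' (u.val + 1) = PS a' u.val + a' u := by
      rw [PS_succ]; congr 1; simp [extF, u.isLt]
    have hbsucc : PS b (u.val + 1) = PS b u.val + b u := by
      rw [PS_succ]; congr 1; simp [extF, u.isLt]
    have hLd : PS a' u.val + a' u ≤ d := by
      have hm : PS a' (u.val + 1) ≤ PS a' n := PS_mono a' u.isLt
      have hdg := PS_degV a'
      omega
    have hj1 : PS a' u.val < d := by omega
    have hj2 : PS a' u.val + a' u - 1 < d := by omega
    have h1 : bpolExp d a' (u, ⟨PS a' u.val, hj1⟩) ≠ 0 := by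
      rw [bpolExp_ne_zero_iff]
      exact ⟨le_refl _, by show PS a' u.val < PS a' (u.val + 1); omega⟩
    have h2 : bpolExp d a' (u, ⟨PS a' u.val + a' u - 1, hj2⟩) ≠ 0 := by
      rw [bpolExp_ne_zero_iff]
      constructor
      · show PS a' u.val ≤ PS a' u.val + a' u - 1
        omega
      · show PS a' u.val + a' u - 1 < PS a' (u.val + 1)
        omega
    have hb1 : bpolExp d b (u, ⟨PS a' u.val, hj1⟩) ≠ 0 := by
      have := hle (u, ⟨PS a' u.val, hj1⟩)
      omega
    have hb2 : bpolExp d b (u, ⟨PS a' u.val + a' u - 1, hj2⟩) ≠ 0 := by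
      have := hle (u, ⟨PS a' u.val + a' u - 1, hj2⟩)
      omega
    rw [bpolExp_ne_zero_iff] at hb1 hb2
    have hb1' : PS b u.val ≤ PS a' u.val ∧ PS a' u.val < PS b (u.val + 1) := hb1
    have hb2' : PS b u.val ≤ PS a' u.val + a' u - 1 ∧
        PS a' u.val + a' u - 1 < PS b (u.val + 1) := hb2
    omega

lemma bpol_set_eq {I : Ideal (MvPolynomial (Fin n) k)} :
    {q : MvPolynomial (Fin n × Fin d) k | ∃ a ∈ minGens I, q = monF k (bpolExp d a)} =
      (monF k) '' ((bpolExp d) '' (minGens I)) := by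
  ext q
  simp only [Set.mem_setOf_eq, Set.mem_image]
  constructor
  · rintro ⟨a, ha, rfl⟩
    exact ⟨bpolExp d a, ⟨a, ha, rfl⟩, rfl⟩
  · rintro ⟨x, ⟨a, ha, rfl⟩, rfl⟩
    exact ⟨a, ha, rfl⟩

lemma mem_bpolIdeal_iff {I : Ideal (MvPolynomial (Fin n) k)} {q : MvPolynomial (Fin n × Fin d) k} :
    q ∈ bpolIdeal d I ↔
      ∀ e ∈ q.support, ∃ a ∈ minGens I, ∀ p, bpolExp d a p ≤ e p := by
  unfold bpolIdeal
  rw [bpol_set_eq, mem_span_monF_iff]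
  refine forall₂_congr fun e _ => ?_
  constructor
  · rintro ⟨x, ⟨a, ha, rfl⟩, hle⟩
    exact ⟨a, ha, hle⟩
  · rintro ⟨a, ha, hle⟩
    exact ⟨bpolExp d a, ⟨a, ha, rfl⟩, hle⟩

lemma monF_mem_bpolIdeal_iff {I : Ideal (MvPolynomial (Fin n) k)} {c : Fin n × Fin d → ℕ} :
    monF k c ∈ bpolIdeal d I ↔ ∃ a ∈ minGens I, ∀ p, bpolExp d a p ≤ c p := by
  rw [mem_bpolIdeal_iff, support_monF]
  simp [eqF_apply]

end BpolSec

section Greedy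

/-- one greedy step: the least admissible value `≥ p` in row `u`, or `d` if stuck. -/
def gstep (d : ℕ) (P : ℕ → ℕ → Prop) (u p : ℕ) : ℕ :=
  sInf ({j | p ≤ j ∧ j < d ∧ ¬ P u j} ∪ {d})

/-- the greedy monotone staircase avoiding `P` (value `d` = stuck). -/
def gre (d : ℕ) (P : ℕ → ℕ → Prop) : ℕ → ℕ
  | 0 => 0
  | u + 1 => gstep d P u (gre d P u)

variable {d : ℕ} {P : ℕ → ℕ → Prop}

lemma gstep_ne (u p : ℕ) : ({j | p ≤ j ∧ j < d ∧ ¬ P u j} ∪ {d} : Set ℕ).Nonempty :=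
  ⟨d, Or.inr rfl⟩

lemma gstep_le_d (u p : ℕ) : gstep d P u p ≤ d :=
  Nat.sInf_le (Or.inr rfl)

lemma le_gstep (u : ℕ) {p : ℕ} (hp : p ≤ d) : p ≤ gstep d P u p := by
  have h := Nat.sInf_mem (gstep_ne (d := d) (P := P) u p)
  rcases h with h | h
  · exact h.1
  · rw [Set.mem_singleton_iff] at h
    unfold gstep
    omega

lemma gstep_avoid {u p : ℕ} (h : gstep d P u p < d) : ¬ P u (gstep d P u p) := by
  have hm := Nat.sInf_mem (gstep_ne (d := d) (P := P) u p)
  rcases hm with hm | hm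
  · exact hm.2.2
  · rw [Set.mem_singleton_iff] at hm
    unfold gstep at h
    omega

lemma gstep_gap {u p j : ℕ} (hpj : p ≤ j) (hlt : j < gstep d P u p) : P u j := by
  have hnm := Nat.notMem_of_lt_sInf hlt
  have hjd : j < d := lt_of_lt_of_le hlt (gstep_le_d u p)
  by_contra hcon
  exact hnm (Or.inl ⟨hpj, hjd, hcon⟩)

lemma gre_le_d : ∀ u, gre d P u ≤ d
  | 0 => Nat.zero_le d
  | u + 1 => gstep_le_d u (gre d P u)

lemma gre_mono : Monotone (gre d P) :=
  monotone_nat_of_le_succ (fun u => le_gstep u (gre_le_d u))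

lemma gre_avoid {u : ℕ} (h : gre d P (u + 1) < d) : ¬ P u (gre d P (u + 1)) :=
  gstep_avoid h

lemma gre_gap {u j : ℕ} (hpj : gre d P u ≤ j) (hlt : j < gre d P (u + 1)) : P u j :=
  gstep_gap hpj hlt

end Greedy

section LemA

variable {n d : ℕ} {k : Type*} [Field k]

lemma lemA {I : Ideal (MvPolynomial (Fin n) k)} (hI : StronglyStable I) (hd : GensDegLE I d)
    (E0 : Set (Fin n × Fin d))
    (H : ∀ (t : ℕ) (htn : t ≤ n) (γ : Fin t → Fin d), Monotone γ →
        (∀ a ∈ minGens I, ∃ m : Fin t, bpolExp d a (Fin.castLE htn m, γ m) ≠ 0) →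
        ∃ m : Fin t, (Fin.castLE htn m, γ m) ∈ E0) :
    ∃ a ∈ minGens I, ∀ p : Fin n × Fin d, bpolExp d a p ≠ 0 → p ∈ E0 := by
  classical
  set P : ℕ → ℕ → Prop := fun u jj =>
    ∃ (hu : u < n) (hj : jj < d), ((⟨u, hu⟩ : Fin n), (⟨jj, hj⟩ : Fin d)) ∈ E0 with hPdef
  set g : ℕ → ℕ := gre d P with hgdef
  set t : ℕ := sInf {u : ℕ | u < n → d ≤ g (u + 1)} with htdef
  have hnmem : n ∈ {u : ℕ | u < n → d ≤ g (u + 1)} := fun h => absurd h (lt_irrefl n)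
  have htn : t ≤ n := Nat.sInf_le hnmem
  have h1 : ∀ u, u < t → u < n ∧ g (u + 1) < d := by
    intro u hu
    have := Nat.notMem_of_lt_sInf (s := {u : ℕ | u < n → d ≤ g (u + 1)}) hu
    rw [Set.mem_setOf_eq] at this
    push_neg at this
    exact ⟨this.1, this.2⟩
  have h2 : ∀ u, t ≤ u → u < n → g (u + 1) = d := by
    intro u htu hun
    have htT : t ∈ {u : ℕ | u < n → d ≤ g (u + 1)} := Nat.sInf_mem ⟨n, hnmem⟩
    rw [Set.mem_setOf_eq] at htT
    have hdt : d ≤ g (t + 1) := htT (lt_of_le_of_lt htu hun)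
    have hmono : g (t + 1) ≤ g (u + 1) := gre_mono (by omega)
    have : g (u + 1) ≤ d := gre_le_d _
    omega
  set γg : Fin t → Fin d := fun m => ⟨g (m.val + 1), (h1 m.val m.isLt).2⟩ with hγdef
  have hγmono : Monotone γg := by
    intro x y hxy
    show γg x ≤ γg y
    rw [hγdef]
    simp only [Fin.mk_le_mk]
    exact gre_mono (by have : x.val ≤ y.val := hxy; omega)
  have havoid : ∀ m : Fin t, (Fin.castLE htn m, γg m) ∉ E0 := by
    intro m hmem
    have hlt : g (m.val + 1) < d := (h1 m.val m.isLt).2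
    exact gre_avoid hlt ⟨(h1 m.val m.isLt).1, hlt, hmem⟩
  -- the greedy staircase is not a cover
  have hnotcov : ∃ a ∈ minGens I, ∀ m : Fin t, bpolExp d a (Fin.castLE htn m, γg m) = 0 := by
    by_cases hcov : ∀ a ∈ minGens I, ∃ m : Fin t, bpolExp d a (Fin.castLE htn m, γg m) ≠ 0
    · obtain ⟨m, hm⟩ := H t htn γg hγmono hcov
      exact absurd hm (havoid m)
    · push_neg at hcov
      exact hcov
  obtain ⟨a, haG, hnot⟩ := hnotcov
  have hPSa : ∀ m : Fin t, PS a (m.val + 1) ≤ g (m.val + 1) := by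
    have hnoHit : ¬ ∃ m : Fin t, bpolExp d a (Fin.castLE htn m, γg m) ≠ 0 := by
      rintro ⟨m, hm⟩
      exact hm (hnot m)
    rw [hit_iff htn γg hγmono] at hnoHit
    push_neg at hnoHit
    intro m
    have := hnoHit m
    exact this
  set w : Fin n → ℕ := fun u => g (u.val + 1) - g u.val with hwdef
  have hPSw : ∀ r, r ≤ n → PS w r = g r := by
    intro r
    induction r with
    | zero => intro _; rw [PS_zero]; rfl
    | succ r ih =>
      intro hr
      have hrn : r < n := by omega
      rw [PS_succ, ih (by omega)]
      have hex : extF w r = g (r + 1) - g r := by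
        simp only [extF, dif_pos hrn, hwdef]
      have hmono2 : g r ≤ g (r + 1) := gre_mono (Nat.le_succ r)
      rw [hex]
      omega
  have hdom : ∀ u : Fin n, PS a (u.val + 1) ≤ PS w (u.val + 1) := by
    intro u
    rw [hPSw _ u.isLt]
    by_cases hut : u.val < t
    · exact hPSa ⟨u.val, hut⟩
    · rw [h2 u.val (by omega) u.isLt]
      have hm : PS a (u.val + 1) ≤ PS a n := PS_mono a u.isLt
      have hdg := PS_degV a
      have := hd a haG
      omega
  have hw : monF k w ∈ I := stable_dominate hI hdom haG.1
  set vt : ℕ → Fin n → ℕ := fun κ u => min (w u) (κ - PS w u.val) with hvtdef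
  have hvtw : vt (g n) = w := by
    funext u
    have hsucc : PS w u.val + w u = PS w (u.val + 1) := by
      rw [PS_succ]; congr 1; simp [extF, u.isLt]
    have hle : PS w (u.val + 1) ≤ g n := by
      have h5 : PS w (u.val + 1) ≤ PS w n := PS_mono w u.isLt
      rw [hPSw n (le_refl n)] at h5
      exact h5
    show min (w u) (g n - PS w u.val) = w u
    omega
  have hKne : monF k (vt (g n)) ∈ I := by rw [hvtw]; exact hw
  set κ0 : ℕ := sInf {κ | monF k (vt κ) ∈ I} with hκdef
  have hκmem : monF k (vt κ0) ∈ I := by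
    have h := Nat.sInf_mem (s := {κ | monF k (vt κ) ∈ I})
      ⟨g n, show (g n) ∈ {κ | monF k (vt κ) ∈ I} from hKne⟩
    exact h
  have hPSv : ∀ κ r, r ≤ n → PS (vt κ) r = min (PS w r) κ := by
    intro κ r
    induction r with
    | zero => intro _; rw [PS_zero, PS_zero]; omega
    | succ r ih =>
      intro hr
      have hrn : r < n := by omega
      rw [PS_succ, PS_succ, ih (by omega)]
      have he1 : extF (vt κ) r = min (w ⟨r, hrn⟩) (κ - PS w r) := by
        simp only [extF, dif_pos hrn, hvtdef]
      have he2 : extF w r = w ⟨r, hrn⟩ := by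
        simp only [extF, dif_pos hrn]
      rw [he1, he2]
      omega
  have hκpos : ∀ m : Fin n, 0 < vt κ0 m → PS w m.val < κ0 := by
    intro m hm
    have hm' : 0 < min (w m) (κ0 - PS w m.val) := hm
    omega
  have key : ∀ (m : Fin n), 0 < vt κ0 m →
      ∀ c : Fin n → ℕ, (∀ p, c p = vt κ0 p - (if p = m then 1 else 0)) →
      monF k c ∈ I → False := by
    intro m hm c hcdef hdel
    have hPSm : PS w m.val < κ0 := hκpos m hm
    have PSdel : ∀ r, r ≤ n →
        PS c r + (if m.val < r then 1 else 0) = PS (vt κ0) r := by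
      intro r
      induction r with
      | zero => intro _; simp [PS_zero]
      | succ r ih =>
        intro hr
        have hrn : r < n := by omega
        rw [PS_succ, PS_succ]
        have hext : extF c r =
            extF (vt κ0) r - (if (⟨r, hrn⟩ : Fin n) = m then 1 else 0) := by
          simp only [extF, dif_pos hrn]
          exact hcdef ⟨r, hrn⟩
        by_cases hrm : r = m.val
        · have hfe : (⟨r, hrn⟩ : Fin n) = m := by
            apply Fin.ext; exact hrm
          have hev : extF (vt κ0) r = vt κ0 m := by
            simp only [extF, dif_pos hrn, hfe]
          rw [hext, if_pos hfe, hev]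
          have h3 := ih (by omega)
          have h4 : ¬ m.val < r := by omega
          have h5 : m.val < r + 1 := by omega
          rw [if_neg h4] at h3
          rw [if_pos h5]
          have hm' : 0 < vt κ0 m := hm
          omega
        · have hfe : (⟨r, hrn⟩ : Fin n) ≠ m := by
            intro hh; exact hrm (by rw [← hh])
          rw [hext, if_neg hfe]
          have h3 := ih (by omega)
          by_cases h4 : m.val < r
          · rw [if_pos h4] at h3
            rw [if_pos (by omega)]
            omega
          · rw [if_neg h4] at h3
            rw [if_neg (by omega)]
            omega
    have hdomdel : ∀ u : Fin n,
        PS c (u.val + 1) ≤ PS (vt (κ0 - 1)) (u.val + 1) := by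
      intro u
      have e1 := hPSv (κ0 - 1) (u.val + 1) u.isLt
      have e2 := hPSv κ0 (u.val + 1) u.isLt
      have e3 := PSdel (u.val + 1) u.isLt
      by_cases hmu : m.val < u.val + 1
      · rw [if_pos hmu] at e3
        omega
      · rw [if_neg hmu] at e3
        have hps : PS w (u.val + 1) ≤ PS w m.val := PS_mono w (by omega)
        omega
    have hIdel : monF k (vt (κ0 - 1)) ∈ I := stable_dominate hI hdomdel hdel
    have hle := Nat.sInf_le (show (κ0 - 1) ∈ {κ | monF k (vt κ) ∈ I} from hIdel)
    omega
  have hvmin : vt κ0 ∈ minGens I := by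
    refine ⟨hκmem, ?_⟩
    intro m hm hdel
    refine key m hm _ ?_ hdel
    intro p
    simp only [Pi.sub_apply, Pi.single_apply]
    by_cases h : p = m <;> simp [h]
  refine ⟨vt κ0, hvmin, ?_⟩
  intro p hpne
  rw [bpolExp_ne_zero_iff] at hpne
  obtain ⟨hge, hlt⟩ := hpne
  have e1 := hPSv κ0 p.1.val (le_of_lt p.1.isLt)
  have e2 := hPSv κ0 (p.1.val + 1) p.1.isLt
  have hwm : PS w (p.1.val + 1) = PS w p.1.val + w p.1 := by
    rw [PS_succ]; congr 1; simp [extF, p.1.isLt]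
  have hglow : g p.1.val ≤ p.2.val ∧ p.2.val < g (p.1.val + 1) := by
    rw [← hPSw p.1.val (le_of_lt p.1.isLt), ← hPSw (p.1.val + 1) p.1.isLt]
    constructor
    · omega
    · omega
  have hP : P p.1.val p.2.val := gre_gap hglow.1 hglow.2
  obtain ⟨hu, hj, hmem⟩ := hP
  exact hmem

end LemA

section Assemble

variable {n d : ℕ} {k : Type*} [Field k]

lemma bpol_le_var {I : Ideal (MvPolynomial (Fin n) k)} (t : ℕ) (htn : t ≤ n)
    (γ : Fin t → Fin d)
    (hcov : ∀ a ∈ minGens I, ∃ m : Fin t, bpolExp d a (Fin.castLE htn m, γ m) ≠ 0) :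
    bpolIdeal d I ≤
      varIdeal k {p : Fin n × Fin d | ∃ i : Fin t, p = (Fin.castLE htn i, γ i)} := by
  unfold bpolIdeal
  rw [Ideal.span_le]
  rintro q ⟨a, ha, rfl⟩
  rw [SetLike.mem_coe, monF_mem_varIdeal_iff]
  obtain ⟨m, hm⟩ := hcov a ha
  exact ⟨(Fin.castLE htn m, γ m), ⟨m, rfl⟩, hm⟩

lemma cover_of_le {I : Ideal (MvPolynomial (Fin n) k)} (t : ℕ) (htn : t ≤ n)
    (γ : Fin t → Fin d)
    (hle : bpolIdeal d I ≤
      varIdeal k {p : Fin n × Fin d | ∃ i : Fin t, p = (Fin.castLE htn i, γ i)}) :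
    ∀ a ∈ minGens I, ∃ m : Fin t, bpolExp d a (Fin.castLE htn m, γ m) ≠ 0 := by
  intro a ha
  have hmem : monF k (bpolExp d a) ∈ bpolIdeal d I := Ideal.subset_span ⟨a, ha, rfl⟩
  have hv := hle hmem
  rw [monF_mem_varIdeal_iff] at hv
  obtain ⟨p, ⟨m, rfl⟩, hne⟩ := hv
  exact ⟨m, hne⟩

end Assemble

end AuxDev

/-- A monomial ideal `I` (generators of degree ≤ d) is strongly stable iff
`b-pol(I)` has an irreducible decomposition `⋂_{s=1}^r (x_{1,γ₁^s}, …, x_{t_s,γ_{t_s}^s})`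
with `γ₁^s ≤ γ₂^s ≤ ⋯ ≤ γ_{t_s}^s` for each `s`. -/
theorem stronglyStable_iff_bpol_decomposition {n d : ℕ} {k : Type*} [Field k]
    (I : Ideal (MvPolynomial (Fin n) k)) (hmon : IsMonomialIdeal I) (hd : GensDegLE I d) :
    StronglyStable I ↔
      ∃ (r : ℕ) (t : Fin r → ℕ) (ht : ∀ s, t s ≤ n)
        (γ : (s : Fin r) → Fin (t s) → Fin d),
        (∀ s, Monotone (γ s)) ∧
        bpolIdeal d I =
          ⨅ s : Fin r, varIdeal k {p : Fin n × Fin d |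
            ∃ i : Fin (t s), p = (Fin.castLE (ht s) i, γ s i)} := by
  classical
  constructor
  · -- strongly stable implies the decomposition
    intro hSS
    let T0 := Σ tt : Fin (n + 1), (Fin (tt : ℕ) → Fin d)
    let Cov : T0 → Prop := fun x => Monotone x.2 ∧
      ∀ a ∈ minGens I, ∃ m : Fin (x.1 : ℕ),
        bpolExp d a (Fin.castLE x.1.is_le m, x.2 m) ≠ 0
    let ST := {x : T0 // Cov x}
    let FS : ST → Set (Fin n × Fin d) := fun x =>
      {p | ∃ i : Fin (x.1.1 : ℕ), p = (Fin.castLE x.1.1.is_le i, x.1.2 i)}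
    haveI : Fintype ST := Fintype.ofFinite ST
    let r : ℕ := Fintype.card ST
    let eqv : ST ≃ Fin r := Fintype.equivFin ST
    have key : bpolIdeal d I = ⨅ x : ST, varIdeal k (FS x) := by
      apply le_antisymm
      · apply le_iInf
        intro x
        exact bpol_le_var _ _ _ x.2.2
      · intro q hq
        rw [Submodule.mem_iInf] at hq
        rw [mem_bpolIdeal_iff]
        intro e he
        have HH : ∀ (t' : ℕ) (htn' : t' ≤ n) (γ' : Fin t' → Fin d), Monotone γ' →
            (∀ a ∈ minGens I, ∃ m : Fin t', bpolExp d a (Fin.castLE htn' m, γ' m) ≠ 0) →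
            ∃ m : Fin t', (Fin.castLE htn' m, γ' m) ∈ {p : Fin n × Fin d | e p ≠ 0} := by
          intro t' htn' γ' mono' cov'
          let x : ST := ⟨⟨⟨t', by omega⟩, γ'⟩, mono', cov'⟩
          have hx := hq x
          rw [mem_varIdeal_iff] at hx
          obtain ⟨p, hpFS, hne⟩ := hx e he
          obtain ⟨i, rfl⟩ := hpFS
          exact ⟨i, hne⟩
        obtain ⟨a, haG, hsupp⟩ := lemA hSS hd {p : Fin n × Fin d | e p ≠ 0} HH
        refine ⟨a, haG, ?_⟩
        intro p
        by_cases hz : bpolExp d a p = 0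
        · omega
        · have h1 : e p ≠ 0 := hsupp p hz
          have h2 := bpolExp_le_one (d := d) a p
          omega
    refine ⟨r, fun s => ((eqv.symm s).1.1 : ℕ), fun s => (eqv.symm s).1.1.is_le,
      fun s => (eqv.symm s).1.2, fun s => (eqv.symm s).2.1, ?_⟩
    rw [key]
    exact (Equiv.iInf_comp (g := fun x : ST => varIdeal k (FS x)) eqv.symm).symm
  · -- the decomposition implies strongly stable
    rintro ⟨r, t, ht, γ, hmono, heq⟩
    refine ⟨hmon, ?_⟩
    intro a ha i j hji hai
    have hcov : ∀ s : Fin r, ∀ a' ∈ minGens I,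
        ∃ m : Fin (t s), bpolExp d a' (Fin.castLE (ht s) m, γ s m) ≠ 0 := by
      intro s
      apply cover_of_le
      rw [heq]
      exact iInf_le _ s
    have hPSab : ∀ rr : ℕ,
        PS a rr ≤ PS (a - Pi.single i 1 + Pi.single j 1) rr :=
      PS_move_le hai hji
    have hitb : ∀ s : Fin r, ∃ m : Fin (t s),
        bpolExp d (a - Pi.single i 1 + Pi.single j 1) (Fin.castLE (ht s) m, γ s m) ≠ 0 := by
      intro s
      rw [hit_iff (ht s) (γ s) (hmono s)]
      obtain ⟨m, hm⟩ := hcov s a ha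
      rw [bpolExp_ne_zero_iff] at hm
      have hm' : PS a m.val ≤ (γ s m : ℕ) ∧ (γ s m : ℕ) < PS a (m.val + 1) := hm
      refine ⟨m, ?_⟩
      have := hPSab (m.val + 1)
      omega
    have hmemJ : monF k (bpolExp d (a - Pi.single i 1 + Pi.single j 1)) ∈ bpolIdeal d I := by
      rw [heq, Submodule.mem_iInf]
      intro s
      rw [monF_mem_varIdeal_iff]
      obtain ⟨m, hm⟩ := hitb s
      exact ⟨(Fin.castLE (ht s) m, γ s m), ⟨m, rfl⟩, hm⟩
    rw [monF_mem_bpolIdeal_iff] at hmemJ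
    obtain ⟨a', ha'G, hle⟩ := hmemJ
    have ha'b : a' ≤ (a - Pi.single i 1 + Pi.single j 1) := nest (hd a' ha'G) hle
    exact mem_of_le ha'b ha'G.1
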